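/- arXiv:math/0408153 — 3 statements merged into one kernel-verified Lean document; each statement's English description precedes it below -/
import Mathlib

section
/- For p an odd prime, the point Q = (-T, T^2) on the elliptic curve E_T : y^2 = x^3 + T x^2 - T^3 x over F_p(T) has infinite order in the Mordell–Weil group E_T(F_p(T)). -/
/-!
On a curve `y² = x(x² + ax + b)` the doubling formula reads `x(2P) = ((x² - b) / 2y)²`, so the
`x`-coordinate of a double is a square, and `t = (0, 0)` is a double only if `b` is a square.
For `a = T`, `b = -T³` the point `t` is the only point of order two, because
`a² - 4b = T² + 4T³` has odd degree and so is not a square. Neither `t`, nor `Q = (-T, T²)`,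
nor `Q + t`, whose `x`-coordinate is `b / (-T) = T²`, is a double: `-T³` and `-T` have odd
degree, and `x(2P) = T²` makes `x(P)` integral over `𝔽_p[T]`, hence a polynomial `f` with
`(f² + T³)² = 4T²f(f² + Tf - T³)`; dividing by `T` twice leaves an identity that fails at
`T = 0`. If `Q` had finite order `n`, then either `n` is odd and `Q` is a double, or `n = 2m`,
`mQ = t`, and `t` or `Q + t` is a double.
-/

open Polynomial

theorem RatFunc.not_isSquare_algebraMap_of_odd_natDegree {K : Type*} [Field K] {q : K[X]}
    (hq : Odd q.natDegree) : ¬IsSquare (algebraMap K[X] (RatFunc K) q) := by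
  rintro ⟨a, ha⟩
  have hq0 : q ≠ 0 := by rintro rfl; simp at hq
  have ha0 : a ≠ 0 := by rintro rfl; simp [hq0] at ha
  have hdeg := congrArg RatFunc.intDegree ha
  rw [RatFunc.intDegree_polynomial, RatFunc.intDegree_mul ha0 ha0] at hdeg
  exact Int.not_even_iff_odd.mpr (by exact_mod_cast hq) ⟨_, hdeg⟩

theorem addOrderOf_eq_zero_of_forall_add_self_ne {G : Type*} [AddCommGroup G] {q t : G}
    (htors : ∀ P : G, P + P = 0 → P = 0 ∨ P = t) (ht : ∀ P : G, P + P ≠ t)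
    (hq : ∀ P : G, P + P ≠ q) (hqt : ∀ P : G, P + P ≠ q + t) : addOrderOf q = 0 := by
  by_contra hn
  have hnq : addOrderOf q • q = 0 := addOrderOf_nsmul_eq_zero q
  obtain ⟨m, hm⟩ | ⟨m, hm⟩ := Nat.even_or_odd (addOrderOf q)
  · have hmq : m • q = t := by
      refine (htors _ ?_).resolve_left ?_
      · rwa [← add_nsmul, ← hm]
      · exact nsmul_ne_zero_of_lt_addOrderOf (by omega) (by omega)
    obtain ⟨l, rfl | rfl⟩ := Nat.even_or_odd' m
    · exact ht (l • q) (by rw [← add_nsmul, ← two_mul, hmq])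
    · refine hqt ((l + 1) • q) ?_
      rw [← add_nsmul, ← hmq, ← succ_nsmul']
      congr 1
      ring
  · refine hq ((m + 1) • q) ?_
    rw [← add_nsmul, show m + 1 + (m + 1) = addOrderOf q + 1 by omega, succ_nsmul, hnq, zero_add]

theorem isIntegral_of_doubling_relation {R K : Type*} [CommRing R] [CommRing K] [Algebra R K]
    {x : K} {a b c : R} (h : (x ^ 2 - algebraMap R K b) ^ 2 =
      4 * algebraMap R K c * (x ^ 3 + algebraMap R K a * x ^ 2 + algebraMap R K b * x)) :
    IsIntegral R x := by
  refine ⟨X ^ 4 - C (4 * c) * X ^ 3 - C (2 * b + 4 * c * a) * X ^ 2 - C (4 * c * b) * X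
    + C (b ^ 2), by monicity!, ?_⟩
  simp only [eval₂_add, eval₂_sub, eval₂_mul, eval₂_pow, eval₂_X, eval₂_C, eval₂_ofNat, map_add,
    map_mul, map_pow, map_ofNat]
  linear_combination h

theorem Polynomial.sq_add_X_pow_three_sq_ne {R : Type*} [CommRing R] [IsDomain R] (f : R[X]) :
    (f ^ 2 + X ^ 3) ^ 2 ≠ 4 * X ^ 2 * (f ^ 3 + X * f ^ 2 - X ^ 3 * f) := by
  intro h₁
  have X_dvd {g : R[X]} (hg : g.eval 0 ^ 4 = 0) : X ∣ g :=
    X_dvd_iff.mpr (by rw [coeff_zero_eq_eval_zero]; exact pow_eq_zero_iff four_ne_zero |>.mp hg)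
  obtain ⟨g, rfl⟩ := X_dvd (by simpa using congrArg (eval 0) h₁)
  have h₂ : (g ^ 2 + X) ^ 2 = 4 * X * g * (g ^ 2 + g - X) :=
    mul_left_cancel₀ (pow_ne_zero 4 X_ne_zero) (by linear_combination h₁)
  obtain ⟨k, rfl⟩ := X_dvd (by simpa using congrArg (eval 0) h₂)
  have h₃ : (X * k ^ 2 + 1) ^ 2 = 4 * X * k * (X * k ^ 2 + k - 1) :=
    mul_left_cancel₀ (pow_ne_zero 2 X_ne_zero) (by linear_combination h₂)
  simpa using congrArg (eval 0) h₃

namespace RatFunc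

variable {K : Type*} [Field K]

lemma not_isSquare_neg_X : ¬IsSquare (-X : RatFunc K) := by
  have := not_isSquare_algebraMap_of_odd_natDegree (q := -(Polynomial.X : K[X])) (by simp)
  rwa [map_neg, algebraMap_X] at this

lemma not_isSquare_neg_X_pow_three : ¬IsSquare (-X ^ 3 : RatFunc K) := by
  have := not_isSquare_algebraMap_of_odd_natDegree (q := -(Polynomial.X ^ 3 : K[X]))
    (by rw [natDegree_neg, natDegree_X_pow]; decide)
  rwa [map_neg, map_pow, algebraMap_X] at this

lemma not_isSquare_X_sq_add_four_mul_X_pow_three (h2 : (2 : K) ≠ 0) :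
    ¬IsSquare (X ^ 2 - 4 * -X ^ 3 : RatFunc K) := by
  have h4 : (4 : K) ≠ 0 := by simpa [show (4 : K) = 2 * 2 by norm_num] using h2
  have hdeg : (Polynomial.C 4 * Polynomial.X ^ 3 + Polynomial.X ^ 2 : K[X]).natDegree = 3 := by
    compute_degree!
  have := not_isSquare_algebraMap_of_odd_natDegree (hdeg ▸ (by decide : Odd 3))
  rw [map_add, map_mul, map_pow, map_pow, algebraMap_C, algebraMap_X, map_ofNat] at this
  convert this using 2
  ring

end RatFunc

namespace WeierstrassCurve.Affine

variable {F : Type*} [Field F] {a b : F}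

abbrev curveWithRootZero (a b : F) : Affine F :=
  { a₁ := 0, a₂ := a, a₃ := 0, a₄ := b, a₆ := 0 }

lemma curveWithRootZero_equation_iff {x y : F} :
    (curveWithRootZero a b).Equation x y ↔ y ^ 2 = x ^ 3 + a * x ^ 2 + b * x := by
  simp [equation_iff]

variable [DecidableEq F]

lemma curveWithRootZero_addX_slope_self {x y : F} (h : (curveWithRootZero a b).Equation x y)
    (hy : 2 * y ≠ 0) :
    (curveWithRootZero a b).addX x x ((curveWithRootZero a b).slope x x y y)
      = ((x ^ 2 - b) / (2 * y)) ^ 2 := by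
  rw [curveWithRootZero_equation_iff] at h
  have hslope : (curveWithRootZero a b).slope x x y y
      = (3 * x ^ 2 + 2 * a * x + b) / (2 * y) := by
    rw [slope_of_Y_ne rfl (by simp only [negY]; contrapose! hy; linear_combination hy)]
    simp only [zero_mul, sub_zero, negY, sub_neg_eq_add]
    ring
  have h2 : (2 : F) ≠ 0 := left_ne_zero_of_mul hy
  have hy0 : y ≠ 0 := right_ne_zero_of_mul hy
  rw [hslope, addX]
  field_simp
  linear_combination (-4 * a - 8 * x) * h

lemma curveWithRootZero_addX_slope_zero {x y : F} (h : (curveWithRootZero a b).Equation x y)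
    (hx : x ≠ 0) :
    (curveWithRootZero a b).addX x 0 ((curveWithRootZero a b).slope x 0 y 0) = b / x := by
  rw [curveWithRootZero_equation_iff] at h
  rw [slope_of_X_ne hx, addX]
  field_simp
  linear_combination x * h

lemma Point.exists_of_add_self_eq_some {x₃ y₃ : F} {h₃ : (curveWithRootZero a b).Nonsingular x₃ y₃}
    {P : (curveWithRootZero a b).Point} (hP : P + P = .some _ _ h₃) :
    ∃ x y : F, (curveWithRootZero a b).Equation x y ∧ 2 * y ≠ 0 ∧
      x₃ = ((x ^ 2 - b) / (2 * y)) ^ 2 := by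
  rcases P with _ | ⟨x, y, h⟩
  · exact absurd hP.symm (Point.some_ne_zero h₃)
  by_cases hy : y = (curveWithRootZero a b).negY x y
  · rw [Point.add_self_of_Y_eq hy] at hP
    exact absurd hP.symm (Point.some_ne_zero h₃)
  have h2y : 2 * y ≠ 0 := by simp only [negY] at hy; contrapose! hy; linear_combination hy
  rw [Point.add_self_of_Y_ne hy, Point.some.injEq] at hP
  exact ⟨x, y, h.1, h2y, hP.1 ▸ curveWithRootZero_addX_slope_self h.1 h2y⟩

lemma Point.isSquare_of_add_self_eq_some {x₃ y₃ : F}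
    {h₃ : (curveWithRootZero a b).Nonsingular x₃ y₃} {P : (curveWithRootZero a b).Point}
    (hP : P + P = .some _ _ h₃) : IsSquare x₃ := by
  obtain ⟨x, y, -, -, hx₃⟩ := Point.exists_of_add_self_eq_some hP
  exact ⟨_, hx₃.trans (sq _)⟩

lemma Point.isSquare_of_add_self_eq_some_zero {h₀ : (curveWithRootZero a b).Nonsingular 0 0}
    {P : (curveWithRootZero a b).Point} (hP : P + P = .some _ _ h₀) : IsSquare b := by
  obtain ⟨x, y, -, hy, hx₃⟩ := Point.exists_of_add_self_eq_some hP
  have : x ^ 2 - b = 0 := by simpa [hy] using hx₃.symm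
  exact ⟨x, by linear_combination -this⟩

lemma Point.eq_zero_or_eq_some_zero_of_add_self_eq_zero (h2 : (2 : F) ≠ 0)
    (hab : ¬IsSquare (a ^ 2 - 4 * b)) (h₀ : (curveWithRootZero a b).Nonsingular 0 0)
    {P : (curveWithRootZero a b).Point} (hP : P + P = 0) : P = 0 ∨ P = .some _ _ h₀ := by
  rcases P with _ | ⟨x, y, h⟩
  · exact .inl rfl
  by_cases hy : y = (curveWithRootZero a b).negY x y
  swap
  · exact absurd hP (by rw [Point.add_self_of_Y_ne hy]; exact Point.some_ne_zero _)
  have hy0 : y = 0 := by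
    simp only [negY] at hy
    exact (mul_eq_zero.mp (by linear_combination hy : 2 * y = 0)).resolve_left h2
  have hx : x * (x ^ 2 + a * x + b) = 0 := by
    have := curveWithRootZero_equation_iff.mp h.1
    rw [hy0] at this
    linear_combination -this
  obtain hx0 | hquad := mul_eq_zero.mp hx
  · subst hx0 hy0
    exact .inr rfl
  · exact absurd ⟨2 * x + a, by linear_combination -4 * hquad⟩ hab

end WeierstrassCurve.Affine

open WeierstrassCurve.Affine

section CurveT

variable (K : Type*) [Field K]

noncomputable abbrev curveT : WeierstrassCurve.Affine (RatFunc K) :=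
  curveWithRootZero RatFunc.X (-RatFunc.X ^ 3)

variable {K} [DecidableEq (RatFunc K)]

lemma curveT_add_self_ne_some_of_eq_X_sq {x₃ y₃ : RatFunc K} {h₃ : (curveT K).Nonsingular x₃ y₃}
    (hx₃ : x₃ = RatFunc.X ^ 2) (P : (curveT K).Point) : P + P ≠ .some _ _ h₃ := by
  intro hP
  obtain ⟨x, y, hxy, hy, hx₃'⟩ := Point.exists_of_add_self_eq_some hP
  have hrel : (x ^ 2 - algebraMap K[X] _ (-X ^ 3)) ^ 2 = 4 * algebraMap K[X] _ (X ^ 2) *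
      (x ^ 3 + algebraMap K[X] _ X * x ^ 2 + algebraMap K[X] _ (-X ^ 3) * x) := by
    rw [curveWithRootZero_equation_iff] at hxy
    rw [hx₃, div_pow, eq_div_iff (pow_ne_zero 2 hy)] at hx₃'
    simp only [map_neg, map_pow, RatFunc.algebraMap_X]
    linear_combination -hx₃' + 4 * RatFunc.X ^ 2 * hxy
  obtain ⟨f, rfl⟩ := IsIntegrallyClosed.isIntegral_iff.mp (isIntegral_of_doubling_relation hrel)
  refine Polynomial.sq_add_X_pow_three_sq_ne f (IsFractionRing.injective K[X] (RatFunc K) ?_)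
  simp only [map_neg, map_pow, map_mul, map_add, map_sub, map_ofNat] at hrel ⊢
  linear_combination hrel

theorem curveT_addOrderOf_some_eq_zero (h2 : (2 : K) ≠ 0)
    (h : (curveT K).Nonsingular (-RatFunc.X) (RatFunc.X ^ 2)) :
    addOrderOf (Point.some _ _ h) = 0 := by
  have h2' : (2 : RatFunc K) ≠ 0 := by
    simpa only [map_ofNat] using (map_ne_zero (algebraMap K (RatFunc K))).mpr h2
  have hX : (-RatFunc.X : RatFunc K) ≠ 0 := neg_ne_zero.mpr RatFunc.X_ne_zero
  have h₀ : (curveT K).Nonsingular 0 0 :=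
    nonsingular_zero.mpr ⟨rfl, .inr (neg_ne_zero.mpr (pow_ne_zero 3 RatFunc.X_ne_zero))⟩
  refine addOrderOf_eq_zero_of_forall_add_self_ne (t := .some _ _ h₀)
    (fun P hP ↦ Point.eq_zero_or_eq_some_zero_of_add_self_eq_zero h2'
      (RatFunc.not_isSquare_X_sq_add_four_mul_X_pow_three h2) h₀ hP)
    (fun P hP ↦ RatFunc.not_isSquare_neg_X_pow_three (Point.isSquare_of_add_self_eq_some_zero hP))
    (fun P hP ↦ RatFunc.not_isSquare_neg_X (Point.isSquare_of_add_self_eq_some hP)) ?_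
  rw [Point.add_of_X_ne hX]
  refine curveT_add_self_ne_some_of_eq_X_sq ?_
  rw [curveWithRootZero_addX_slope_zero h.1 hX]
  field_simp

end CurveT

open Classical in
/-- For `p` an odd prime, the point `Q = (-T, T²)` on the elliptic curve
`E_T : y² = x³ + T x² - T³ x` over `𝔽_p(T)` has infinite order in the Mordell–Weil group
`E_T(𝔽_p(T))`. -/
theorem Q_infinite_order (p : ℕ) [Fact p.Prime] (hp : p ≠ 2)
    (W : WeierstrassCurve.Affine (RatFunc (ZMod p)))
    (hW : W = { a₁ := 0, a₂ := RatFunc.X, a₃ := 0, a₄ := -RatFunc.X ^ 3, a₆ := 0 })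
    (h : WeierstrassCurve.Affine.Nonsingular W (-RatFunc.X) (RatFunc.X ^ 2)) :
    addOrderOf (WeierstrassCurve.Affine.Point.some _ _ h) = 0 := by
  subst hW
  exact curveT_addOrderOf_some_eq_zero (Ring.two_ne_zero ((ZMod.ringChar_zmod_n p).substr hp)) h
end

section
/- The x-coordinate of [4]Q for Q = (-T, T^2) on y^2 = x^3 + T x^2 - T^3 x over F_p(T) (p odd) is non-integral at the place T + 1, i.e., has negative valuation at T = -1. -/
/-!
Write `x([4]Q) = (N / (D (T + 1)))²` with `N = (T + 1)⁴ + 16 T³` and `D = 4 (T² - 4T - 1)`.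
At `T = -1` we get `N = -16` and `D = 16`, both nonzero since `p` is odd, so `N` and `D` are
units at the place `T + 1` and the uniformizer `T + 1` in the denominator gives `x([4]Q)` a pole.
-/

open Polynomial

namespace IsDedekindDomain.HeightOneSpectrum

variable {K : Type*} [Field K] {a : K} (v : HeightOneSpectrum K[X])

theorem intValuation_eq_one_of_eval_ne_zero (hv : v.asIdeal = Ideal.span {X - C a}) {r : K[X]}
    (hr : r.eval a ≠ 0) : v.intValuation r = 1 := by
  rwa [intValuation_eq_one_iff, hv, Ideal.mem_span_singleton, dvd_iff_isRoot]

theorem one_lt_valuation_div_mul_X_sub_C (hv : v.asIdeal = Ideal.span {X - C a}) {f g : K[X]}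
    (hf : f.eval a ≠ 0) (hg : g.eval a ≠ 0) :
    1 < v.valuation (RatFunc K) (algebraMap K[X] (RatFunc K) f /
      algebraMap K[X] (RatFunc K) (g * (X - C a))) := by
  rw [map_div₀, valuation_of_algebraMap, valuation_of_algebraMap, map_mul,
    intValuation_eq_one_of_eval_ne_zero v hv hf, intValuation_eq_one_of_eval_ne_zero v hv hg,
    intValuation_singleton v (X_sub_C_ne_zero a) hv]
  decide

end IsDedekindDomain.HeightOneSpectrum

/-- The `x`-coordinate of `[4]Q` for `Q = (-T, T²)` on `y² = x³ + T x² - T³ x` over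
`𝔽_p(T)` (`p` odd) is non-integral at the place `T + 1`, i.e. it has negative additive
valuation at `T = -1`.  In Mathlib's multiplicative normalization of the `(T+1)`-adic
valuation (where a uniformizer has valuation `ofAdd (-1) < 1` and integral elements have
valuation `≤ 1`), this says that the valuation of `x([4]Q)` is `> 1`. -/
theorem x4Q_not_integral_at_Tplus1 (p : ℕ) [Fact p.Prime] (hp : p ≠ 2)
    (v : IsDedekindDomain.HeightOneSpectrum (Polynomial (ZMod p)))
    (hv : v.asIdeal = Ideal.span {Polynomial.X + 1}) :
    1 < (v.valuation (RatFunc (ZMod p)) :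
        Valuation (RatFunc (ZMod p)) (WithZero (Multiplicative ℤ)))
      ((((RatFunc.X + 1) ^ 4 + 16 * RatFunc.X ^ 3) /
        (4 * (RatFunc.X + 1) * (RatFunc.X ^ 2 - 4 * RatFunc.X - 1))) ^ 2) := by
  have h2 : (2 : ZMod p) ≠ 0 := Ring.two_ne_zero (by rwa [ZMod.ringChar_zmod_n])
  have h16 : (16 : ZMod p) ≠ 0 := by
    simpa [show (16 : ZMod p) = 2 ^ 4 by norm_num] using pow_ne_zero 4 h2
  have hv' : v.asIdeal = Ideal.span {X - C (-1)} := by simpa using hv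
  have hx : ((RatFunc.X + 1) ^ 4 + 16 * RatFunc.X ^ 3) /
      (4 * (RatFunc.X + 1) * (RatFunc.X ^ 2 - 4 * RatFunc.X - 1)) =
      algebraMap (ZMod p)[X] (RatFunc (ZMod p)) ((X + 1) ^ 4 + 16 * X ^ 3) /
        algebraMap (ZMod p)[X] (RatFunc (ZMod p))
          (4 * (X ^ 2 - 4 * X - 1) * (X - C (-1))) := by
    simp only [map_add, map_sub, map_mul, map_pow, map_ofNat, map_one, map_neg,
      RatFunc.algebraMap_X]
    ring
  rw [map_pow, hx]
  exact one_lt_pow₀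
    (v.one_lt_valuation_div_mul_X_sub_C hv' (by norm_num [h16]) (by norm_num [h16])) (by norm_num)
end

section
/- Let κ be a finite field of characteristic p, and let g1, g2 ∈ κ[u] be relatively prime with g2 ≠ 0, and let c, d ∈ κ^×. Then the polynomial f1 = c g1^{2p} + d u g2^{2p} ∈ κ[u] is squarefree. -/
open Polynomial

/-- Let `κ` be a finite field of characteristic `p`, let `g₁, g₂ ∈ κ[u]` be relatively
prime with `g₂ ≠ 0`, and let `c, d ∈ κˣ`.  Then the polynomial
`f₁ = c g₁^{2p} + d u g₂^{2p} ∈ κ[u]` is squarefree. -/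
theorem f1_squarefree {κ : Type*} [Field κ] [Fintype κ]
    (p : ℕ) [Fact p.Prime] [CharP κ p]
    (c d : κ) (hc : c ≠ 0) (hd : d ≠ 0)
    (g₁ g₂ : κ[X]) (hcop : IsCoprime g₁ g₂) (hg₂ : g₂ ≠ 0) :
    Squarefree (C c * g₁ ^ (2 * p) + C d * X * g₂ ^ (2 * p)) := by
  set f := C c * g₁ ^ (2 * p) + C d * X * g₂ ^ (2 * p) with hf
  have hp0 : ((2 * p : ℕ) : κ) = 0 := by
    push_cast
    rw [CharP.cast_eq_zero κ p]; ring
  have hder : f.derivative = C d * g₂ ^ (2 * p) := by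
    simp [hf, derivative_pow, hp0, derivative_mul]
  have hunit : ∀ (a b : κ[X]), IsUnit a → IsCoprime a b := by
    rintro a b ⟨u, rfl⟩
    exact ⟨(↑u⁻¹ : κ[X]ˣ), 0, by simp⟩
  have hcd : IsCoprime (C d) f := hunit _ _ (isUnit_C.mpr hd.isUnit)
  have hcc : IsCoprime (C c) (g₂ ^ (2 * p)) := hunit _ _ (isUnit_C.mpr hc.isUnit)
  have h1 : IsCoprime (C c * g₁ ^ (2 * p)) (g₂ ^ (2 * p)) :=
    hcc.mul_left (hcop.pow)
  have h2 : IsCoprime f (g₂ ^ (2 * p)) := by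
    have := h1.add_mul_left_left (C d * X)
    rwa [show C c * g₁ ^ (2 * p) + g₂ ^ (2 * p) * (C d * X) = f by rw [hf]; ring] at this
  have hsep : f.Separable := by
    rw [Polynomial.Separable, hder]
    exact (hcd.symm).mul_right h2
  exact hsep.squarefree
end
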